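/- arXiv:0902.0637 — 2 statements merged into one kernel-verified Lean document; each statement's English description precedes it below -/
import Mathlib

section
/- Let N ≥ 1, 1 < p < ∞ and q = p/(p−1). Let u ∈ L^p(ℝ^N) be nonnegative, let H ⊂ ℝ^N be a closed halfspace with 0 ∈ H, and let w ∈ L^q(ℝ^N) be nonnegative, radial and radially nonincreasing. Then ∫_{ℝ^N} u w ≤ ∫_{ℝ^N} u^H w. -/
/-!
Polarization only exchanges the values of `u` at the two points `x ∈ H` and `σ_H x`, putting the
larger one at `x`. Since `0 ∈ H`, the point `x` is at least as close to the origin as `σ_H x`, so a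
radially nonincreasing `w` gives `x` the larger weight, and the two-point rearrangement
inequality `s w₁ + t w₂ ≤ max s t · w₁ + min s t · w₂` (for `w₂ ≤ w₁`) holds pointwise. As `σ_H` is
a measure-preserving involution, integrating `f + f ∘ σ_H` computes `2 ∫ f`, and the claim follows.
Hölder's inequality makes all the integrals finite.
-/

open MeasureTheory Filter

/-- Reflection across the boundary hyperplane `{x : ⟪a,x⟫ = b}` of the closed
halfspace `H = {x : ⟪a,x⟫ ≤ b}` (for `‖a‖ = 1`). -/
noncomputable def reflectH {N : ℕ} (a : EuclideanSpace ℝ (Fin N)) (b : ℝ)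
    (x : EuclideanSpace ℝ (Fin N)) : EuclideanSpace ℝ (Fin N) :=
  x - (2 * ((inner ℝ a x : ℝ) - b)) • a

/-- Polarization (two-point rearrangement) of `u` with respect to the closed halfspace
`H = {x : ⟪a,x⟫ ≤ b}` (for `‖a‖ = 1`). -/
noncomputable def polarization {N : ℕ} (a : EuclideanSpace ℝ (Fin N)) (b : ℝ)
    (u : EuclideanSpace ℝ (Fin N) → ℝ) (x : EuclideanSpace ℝ (Fin N)) : ℝ :=
  if (inner ℝ a x : ℝ) ≤ b then max (u x) (u (reflectH a b x))
  else min (u x) (u (reflectH a b x))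

theorem integral_le_integral_of_add_comp_le {α : Type*} [MeasurableSpace α] {μ : Measure α}
    {σ : α → α} (hσ : MeasurePreserving σ μ μ) (hσ' : MeasurableEmbedding σ) {f g : α → ℝ}
    (hf : Integrable f μ) (hg : Integrable g μ) (hfg : ∀ x, f x + f (σ x) ≤ g x + g (σ x)) :
    ∫ x, f x ∂μ ≤ ∫ x, g x ∂μ := by
  have hfσ : Integrable (fun x => f (σ x)) μ := hσ.integrable_comp_of_integrable hf
  have hgσ : Integrable (fun x => g (σ x)) μ := hσ.integrable_comp_of_integrable hg
  have hsum : ∫ x, (f x + f (σ x)) ∂μ ≤ ∫ x, (g x + g (σ x)) ∂μ :=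
    integral_mono (hf.add hfσ) (hg.add hgσ) hfg
  rw [integral_add hf hfσ, integral_add hg hgσ, hσ.integral_comp hσ' f,
    hσ.integral_comp hσ' g] at hsum
  linarith

theorem add_mul_le_max_mul_add_min_mul {s t w₁ w₂ : ℝ} (hw : w₂ ≤ w₁) :
    s * w₁ + t * w₂ ≤ max s t * w₁ + min s t * w₂ := by
  rcases le_total s t with hst | hts
  · rw [max_eq_right hst, min_eq_left hst]
    nlinarith
  · rw [max_eq_left hts, min_eq_right hts]

section Reflection

variable {N : ℕ} {a : EuclideanSpace ℝ (Fin N)} {b : ℝ}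

theorem inner_reflectH (ha : ‖a‖ = 1) (x : EuclideanSpace ℝ (Fin N)) :
    inner ℝ a (reflectH a b x) = 2 * b - inner ℝ a x := by
  have haa : inner ℝ a a = (1 : ℝ) := by
    rw [real_inner_self_eq_norm_sq, ha, one_pow]
  rw [reflectH, inner_sub_right, real_inner_smul_right, haa]
  ring

theorem reflectH_of_inner_eq {x : EuclideanSpace ℝ (Fin N)} (hx : inner ℝ a x = b) :
    reflectH a b x = x := by
  simp [reflectH, hx]

theorem reflectH_involutive (ha : ‖a‖ = 1) : Function.Involutive (reflectH a b) := by
  intro x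
  change reflectH a b x - (2 * (inner ℝ a (reflectH a b x) - b)) • a = x
  rw [inner_reflectH ha, reflectH]
  module

theorem norm_le_norm_reflectH (ha : ‖a‖ = 1) (hb : 0 ≤ b) {x : EuclideanSpace ℝ (Fin N)}
    (hx : inner ℝ a x ≤ b) : ‖x‖ ≤ ‖reflectH a b x‖ := by
  have hsq : ‖reflectH a b x‖ ^ 2 = ‖x‖ ^ 2 + 4 * (b - inner ℝ a x) * b := by
    rw [reflectH, norm_sub_sq_real, real_inner_smul_right, real_inner_comm, norm_smul, ha,
      Real.norm_eq_abs, mul_one, sq_abs]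
    ring
  refine (pow_le_pow_iff_left₀ (norm_nonneg _) (norm_nonneg _) two_ne_zero).1 ?_
  rw [hsq]
  nlinarith

theorem reflectH_eq_reflection_add (ha : ‖a‖ = 1) :
    reflectH a b = fun x => Submodule.reflection (ℝ ∙ a)ᗮ x + (2 * b) • a := by
  funext x
  rw [Submodule.reflection_orthogonal_apply, Submodule.reflection_apply,
    Submodule.starProjection_singleton, ha, reflectH]
  push_cast
  match_scalars <;> ring

theorem measurePreserving_reflectH (ha : ‖a‖ = 1) : MeasurePreserving (reflectH a b) := by
  rw [reflectH_eq_reflection_add ha]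
  exact (measurePreserving_add_right volume _).comp (LinearIsometryEquiv.measurePreserving _)

theorem measurableEmbedding_reflectH (ha : ‖a‖ = 1) : MeasurableEmbedding (reflectH a b) :=
  (MeasurableEquiv.ofInvolutive _ (reflectH_involutive ha)
    (measurePreserving_reflectH ha).measurable).measurableEmbedding

end Reflection

section Polarization

variable {N : ℕ} {a : EuclideanSpace ℝ (Fin N)} {b : ℝ} {u : EuclideanSpace ℝ (Fin N) → ℝ}

theorem polarization_eq_or_eq (x : EuclideanSpace ℝ (Fin N)) :
    polarization a b u x = u x ∨ polarization a b u x = u (reflectH a b x) := by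
  unfold polarization
  split_ifs
  exacts [max_choice _ _, min_choice _ _]

theorem aestronglyMeasurable_polarization (ha : ‖a‖ = 1) (hu : AEStronglyMeasurable u volume) :
    AEStronglyMeasurable (polarization a b u) volume := by
  have huσ := hu.comp_measurePreserving (measurePreserving_reflectH (b := b) ha)
  have hH : MeasurableSet {x : EuclideanSpace ℝ (Fin N) | inner ℝ a x ≤ b} :=
    measurableSet_le (by fun_prop) measurable_const
  classical
  -- `polarization a b u` unfolds to `H.piecewise (u ⊔ u ∘ σ_H) (u ⊓ u ∘ σ_H)`
  exact (((hu.sup huσ).restrict).piecewise hH (hu.inf huσ).restrict :)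

theorem memLp_polarization (ha : ‖a‖ = 1) {p : ENNReal} (hu : MemLp u p volume) :
    MemLp (polarization a b u) p volume := by
  have huσ := hu.comp_measurePreserving (measurePreserving_reflectH (b := b) ha)
  refine (hu.norm.add huσ.norm).of_le (aestronglyMeasurable_polarization ha hu.1)
    (.of_forall fun x => ?_)
  rw [Pi.add_apply, Function.comp_apply,
    Real.norm_of_nonneg (add_nonneg (norm_nonneg _) (norm_nonneg _))]
  rcases polarization_eq_or_eq (a := a) (b := b) (u := u) x with h | h <;> rw [h] <;>
    linarith [norm_nonneg (u x), norm_nonneg (u (reflectH a b x))]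

theorem add_mul_le_polarization_of_inner_le (ha : ‖a‖ = 1) {w : EuclideanSpace ℝ (Fin N) → ℝ}
    {x : EuclideanSpace ℝ (Fin N)} (hx : inner ℝ a x ≤ b) (hw : w (reflectH a b x) ≤ w x) :
    u x * w x + u (reflectH a b x) * w (reflectH a b x) ≤
      polarization a b u x * w x + polarization a b u (reflectH a b x) * w (reflectH a b x) := by
  rcases hx.lt_or_eq with hx | hx
  · have hσx : ¬ inner ℝ a (reflectH a b x) ≤ b := by
      rw [inner_reflectH ha]
      linarith
    rw [polarization, polarization, if_pos hx.le, if_neg hσx, reflectH_involutive ha x, min_comm]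
    exact add_mul_le_max_mul_add_min_mul hw
  · rw [reflectH_of_inner_eq hx, polarization, if_pos hx.le,
      reflectH_of_inner_eq hx, max_self]

theorem add_mul_le_polarization (ha : ‖a‖ = 1) {w : EuclideanSpace ℝ (Fin N) → ℝ}
    (hw : ∀ x, inner ℝ a x ≤ b → w (reflectH a b x) ≤ w x) (x : EuclideanSpace ℝ (Fin N)) :
    u x * w x + u (reflectH a b x) * w (reflectH a b x) ≤
      polarization a b u x * w x + polarization a b u (reflectH a b x) * w (reflectH a b x) := by
  by_cases hx : inner ℝ a x ≤ b
  · exact add_mul_le_polarization_of_inner_le ha hx (hw x hx)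
  · have hσx : inner ℝ a (reflectH a b x) ≤ b := by
      rw [inner_reflectH ha]
      linarith
    have := add_mul_le_polarization_of_inner_le (u := u) ha hσx (hw _ hσx)
    rw [reflectH_involutive ha x] at this
    linarith

end Polarization

theorem statement1_general {N : ℕ} (p q : ℝ) (hp : 1 < p) (hq : q = p / (p - 1))
    (u : EuclideanSpace ℝ (Fin N) → ℝ)
    (hu : MemLp u (ENNReal.ofReal p) volume)
    (a : EuclideanSpace ℝ (Fin N)) (b : ℝ) (ha : ‖a‖ = 1) (hb : 0 ≤ b)
    (w : EuclideanSpace ℝ (Fin N) → ℝ)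
    (hw : MemLp w (ENNReal.ofReal q) volume)
    (W : ℝ → ℝ) (hW : AntitoneOn W (Set.Ici 0)) (hwW : ∀ x, w x = W ‖x‖) :
    ∫ x, u x * w x ≤ ∫ x, polarization a b u x * w x := by
  have : ENNReal.HolderConjugate (ENNReal.ofReal p) (ENNReal.ofReal q) :=
    ((Real.holderConjugate_iff_eq_conjExponent hp).2 hq).ennrealOfReal
  have hw_reflectH : ∀ x, inner ℝ a x ≤ b → w (reflectH a b x) ≤ w x := fun x hx => by
    rw [hwW, hwW]
    exact hW (norm_nonneg _) (norm_nonneg _) (norm_le_norm_reflectH ha hb hx)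
  exact integral_le_integral_of_add_comp_le (measurePreserving_reflectH ha)
    (measurableEmbedding_reflectH ha) (hu.integrable_mul hw)
    ((memLp_polarization ha hu).integrable_mul hw) (add_mul_le_polarization ha hw_reflectH)

/-- For nonnegative `u ∈ L^p(ℝ^N)`, a closed halfspace
`H = {x : ⟪a,x⟫ ≤ b}` containing `0` (i.e. `b ≥ 0`), and a nonnegative, radial and radially
nonincreasing `w ∈ L^q(ℝ^N)` (`q = p/(p-1)`), one has `∫ u w ≤ ∫ u^H w`. -/
theorem statement1 {N : ℕ} (hN : 1 ≤ N) (p q : ℝ) (hp : 1 < p) (hq : q = p / (p - 1))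
    (u : EuclideanSpace ℝ (Fin N) → ℝ)
    (hu : MemLp u (ENNReal.ofReal p) volume) (hu0 : ∀ x, 0 ≤ u x)
    (a : EuclideanSpace ℝ (Fin N)) (b : ℝ) (ha : ‖a‖ = 1) (hb : 0 ≤ b)
    (w : EuclideanSpace ℝ (Fin N) → ℝ)
    (hw : MemLp w (ENNReal.ofReal q) volume) (hw0 : ∀ x, 0 ≤ w x)
    (W : ℝ → ℝ) (hW : AntitoneOn W (Set.Ici 0)) (hwW : ∀ x, w x = W ‖x‖) :
    ∫ x, u x * w x ≤ ∫ x, polarization a b u x * w x :=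
  statement1_general p q hp hq u hu a b ha hb w hw W hW hwW
end

section
/- Let N ≥ 1, 1 ≤ p < ∞ and let u ∈ L^p(ℝ^N) be nonnegative. Then u = u* almost everywhere (where u* is the symmetric decreasing rearrangement of u) if and only if for almost every pair (x,y) ∈ ℝ^N × ℝ^N with ‖x‖ ≤ ‖y‖ one has u(x) ≥ u(y). -/
/-!
For `l > 0` the superlevel set `{u⋆ > l}` is, up to the origin, the centred ball `B` with
`|B| = |{u > l}|`, so `u = u⋆` a.e. as soon as every `{u > l}` is a.e. equal to that ball (rational
levels suffice). If `u` is a.e. radially nonincreasing, every pair in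
`(B \ {u > l}) × ({u > l} \ B)` violates the monotonicity, so the product of the measures of the
two differences vanishes; as `|B| = |{u > l}| < ∞` they have equal measure, hence both are null.
Conversely, `u⋆` is radially nonincreasing by construction.
-/

open MeasureTheory Filter

/-- The symmetric decreasing rearrangement (Schwarz symmetrization) of `u`:
`u⋆ x = sup {l > 0 : vol {u > l} > vol (B(0,‖x‖))}`, with `sup ∅ = 0`. -/
noncomputable def schwarz {N : ℕ} (u : EuclideanSpace ℝ (Fin N) → ℝ)
    (x : EuclideanSpace ℝ (Fin N)) : ℝ :=
  sSup {l : ℝ | 0 < l ∧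
    volume (Metric.ball (0 : EuclideanSpace ℝ (Fin N)) ‖x‖) < volume {y | l < u y}}

open Metric Set Topology
open scoped ENNReal

namespace MeasureTheory.Measure

variable {E : Type*} [NormedAddCommGroup E] [NormedSpace ℝ E] [MeasurableSpace E] [BorelSpace E]
  [FiniteDimensional ℝ E] [Nontrivial E] (μ : Measure E) [μ.IsAddHaarMeasure]

theorem addHaar_ball_lt_addHaar_ball_iff {r s : ℝ} (hr : 0 ≤ r) :
    μ (ball 0 r) < μ (ball 0 s) ↔ r < s := by
  refine ⟨fun h => ?_, fun h => ?_⟩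
  · by_contra! hsr
    exact (measure_mono (ball_subset_ball hsr)).not_gt h
  · have hc : μ (ball 0 1) ≠ 0 := (measure_ball_pos μ 0 one_pos).ne'
    rw [addHaar_ball μ 0 hr, addHaar_ball μ 0 (hr.trans h.le),
      ENNReal.mul_lt_mul_iff_left hc measure_ball_lt_top.ne,
      ENNReal.ofReal_lt_ofReal_iff (pow_pos (hr.trans_lt h) _)]
    exact pow_lt_pow_left₀ h hr Module.finrank_pos.ne'

theorem exists_addHaar_ball_eq {m : ℝ≥0∞} (hm : m ≠ ∞) : ∃ r, μ (ball 0 r) = m := by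
  set c := μ (ball 0 1)
  have hc : c ≠ 0 := (measure_ball_pos μ 0 one_pos).ne'
  have hd : Module.finrank ℝ E ≠ 0 := Module.finrank_pos.ne'
  refine ⟨(m / c).toReal ^ ((Module.finrank ℝ E : ℝ)⁻¹), ?_⟩
  rw [addHaar_ball μ 0 (by positivity), Real.rpow_inv_natCast_pow ENNReal.toReal_nonneg hd,
    ENNReal.ofReal_toReal (ENNReal.div_lt_top hm hc).ne,
    ENNReal.div_mul_cancel hc measure_ball_lt_top.ne]

end MeasureTheory.Measure

namespace MeasureTheory

section

variable {α : Type*} [MeasurableSpace α] {μ : Measure α}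

theorem ae_eq_set_of_measure_eq_of_measure_sdiff_mul_eq_zero {s t : Set α}
    (hs : NullMeasurableSet s μ) (ht : NullMeasurableSet t μ) (hst : μ s = μ t) (hfin : μ s ≠ ∞)
    (h0 : μ (s \ t) * μ (t \ s) = 0) : s =ᵐ[μ] t := by
  have hsymm := measure_sdiff_symm hs ht hst
    (ne_top_of_le_ne_top hfin (measure_mono inter_subset_left))
  rw [hsymm, mul_self_eq_zero] at h0
  exact ae_eq_set.2 ⟨hsymm.trans h0, h0⟩

theorem MemLp.measure_superlevel_ne_top {p : ℝ≥0∞} {u : α → ℝ} (hu : MemLp u p μ)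
    (hp0 : p ≠ 0) (hp : p ≠ ∞) {l : ℝ} (hl : 0 < l) : μ {x | l < u x} ≠ ∞ := by
  refine ne_top_of_le_ne_top (hu.meas_ge_lt_top hp0 hp (ε := l.toNNReal) (by simpa)).ne
    (measure_mono fun x hx => ?_)
  rw [mem_ofPred_eq, Real.toNNReal_le_iff_le_coe, coe_nnnorm]
  exact hx.le.trans (le_abs_self _)

theorem tendsto_measure_superlevel_atTop {u : α → ℝ} (hu : AEMeasurable u μ)
    (hfin : ∃ l, μ {x | l < u x} ≠ ∞) :
    Tendsto (fun l => μ {x | l < u x}) atTop (𝓝 0) := by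
  have hempty : ⋂ l : ℝ, {x | l < u x} = ∅ :=
    eq_empty_of_forall_notMem fun x hx => lt_irrefl (u x) (mem_iInter.1 hx (u x))
  simpa [hempty, Function.comp_def] using tendsto_measure_iInter_atTop (μ := μ)
    (fun l => nullMeasurableSet_lt aemeasurable_const hu)
    (fun l l' hll' x hx => hll'.trans_lt hx) hfin

theorem exists_gt_lt_measure_superlevel {u : α → ℝ} {l : ℝ} {v : ℝ≥0∞}
    (hv : v < μ {x | l < u x}) : ∃ l' > l, v < μ {x | l' < u x} := by
  obtain ⟨w, hw_anti, hw_gt, hw_lim⟩ := exists_seq_strictAnti_tendsto l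
  have hunion : ⋃ n, {x | w n < u x} = {x | l < u x} := by
    ext x
    simp only [mem_iUnion, mem_ofPred_eq]
    exact ⟨fun ⟨n, hn⟩ => (hw_gt n).trans hn, fun hx => (hw_lim.eventually (gt_mem_nhds hx)).exists⟩
  have hlim := tendsto_measure_iUnion_atTop (μ := μ) (s := fun n => {x | w n < u x})
    fun m n hmn x (hx : w m < u x) => (hw_anti.antitone hmn).trans_lt hx
  rw [hunion] at hlim
  obtain ⟨n, hn⟩ := (hlim.eventually (lt_mem_nhds hv)).exists
  exact ⟨w n, hw_gt n, hn⟩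

theorem ae_eq_of_forall_superlevel_ae_eq {f g : α → ℝ} (hf : ∀ x, 0 ≤ f x) (hg : ∀ x, 0 ≤ g x)
    (h : ∀ q : ℚ, 0 < q → {x | (q : ℝ) < f x} =ᵐ[μ] {x | (q : ℝ) < g x}) : f =ᵐ[μ] g := by
  have hle : ∀ a b : ℝ, 0 ≤ b → (∀ q : ℚ, 0 < q → (q : ℝ) < a → (q : ℝ) < b) → a ≤ b :=
    fun a b hb hab => le_of_forall_rat_lt_imp_le fun q hq =>
      (le_or_gt q 0).elim (fun hq0 => (Rat.cast_nonpos.2 hq0).trans hb) fun hq0 => (hab q hq0 hq).le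
  have hall : ∀ᵐ x ∂μ, ∀ q : ℚ, 0 < q → ((q : ℝ) < f x ↔ (q : ℝ) < g x) :=
    ae_all_iff.2 fun q => ae_all_iff.2 fun hq => eventuallyEq_set.1 (h q hq)
  filter_upwards [hall] with x hx
  exact le_antisymm (hle _ _ (hg x) fun q hq => (hx q hq).1)
    (hle _ _ (hf x) fun q hq => (hx q hq).2)

end

theorem superlevel_ae_eq_ball_of_ae_antitone {E : Type*} [NormedAddCommGroup E] [MeasurableSpace E]
    [OpensMeasurableSpace E] {μ : Measure E} [SFinite μ] {f : E → ℝ} (hf : AEMeasurable f μ)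
    (hanti : ∀ᵐ z ∂μ.prod μ, ‖z.1‖ ≤ ‖z.2‖ → f z.2 ≤ f z.1) {l r : ℝ}
    (hr : μ (ball 0 r) = μ {x | l < f x}) (hfin : μ {x | l < f x} ≠ ∞) :
    {x | l < f x} =ᵐ[μ] ball 0 r := by
  refine ae_eq_set_of_measure_eq_of_measure_sdiff_mul_eq_zero
    (nullMeasurableSet_lt aemeasurable_const hf) measurableSet_ball.nullMeasurableSet
    hr.symm hfin ?_
  rw [mul_comm, ← Measure.prod_prod]
  refine measure_mono_null (fun z ⟨⟨hx, hfx⟩, hy, hy'⟩ => ?_) (ae_iff.1 hanti)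
  rw [mem_ball_zero_iff] at hx hy'
  exact fun hmono =>
    (not_lt.1 hfx).not_gt ((hy : l < f z.2).trans_le (hmono (hx.le.trans (not_lt.1 hy'))))

end MeasureTheory

section Schwarz

variable {N : ℕ} {u : EuclideanSpace ℝ (Fin N) → ℝ}

theorem schwarz_nonneg (u : EuclideanSpace ℝ (Fin N) → ℝ) (x : EuclideanSpace ℝ (Fin N)) :
    0 ≤ schwarz u x :=
  Real.sSup_nonneg fun _ hl => hl.1.le

theorem lt_schwarz_iff (hu : AEMeasurable u volume)
    (hfin : ∀ l, 0 < l → volume {y | l < u y} ≠ ∞) {x : EuclideanSpace ℝ (Fin N)} (hx : x ≠ 0)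
    {l : ℝ} (hl : 0 < l) :
    l < schwarz u x ↔ volume (ball (0 : EuclideanSpace ℝ (Fin N)) ‖x‖) < volume {y | l < u y} := by
  set v := volume (ball (0 : EuclideanSpace ℝ (Fin N)) ‖x‖)
  have hbdd : BddAbove {l : ℝ | 0 < l ∧ v < volume {y | l < u y}} := by
    have hv : v ≠ 0 := (measure_ball_pos _ _ (norm_pos_iff.2 hx)).ne'
    obtain ⟨L, hL⟩ := ((tendsto_measure_superlevel_atTop hu ⟨1, hfin 1 one_pos⟩).eventually
      (gt_mem_nhds (pos_iff_ne_zero.2 hv))).exists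
    refine ⟨L, fun l' ⟨_, hl'⟩ => le_of_not_gt fun hLl' => ?_⟩
    exact (hl'.trans_le (measure_mono fun y (hy : l' < u y) => hLl'.trans hy)).not_gt hL
  constructor
  · intro h
    rcases eq_empty_or_nonempty {l : ℝ | 0 < l ∧ v < volume {y | l < u y}} with hS | hS
    · rw [schwarz, hS, Real.sSup_empty] at h
      exact absurd h hl.not_gt
    obtain ⟨l', ⟨_, hvl'⟩, hll'⟩ := exists_lt_of_lt_csSup hS h
    exact hvl'.trans_le (measure_mono fun y (hy : l' < u y) => hll'.trans hy)
  · intro h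
    obtain ⟨l', hll', hvl'⟩ := exists_gt_lt_measure_superlevel h
    exact hll'.trans_le (le_csSup hbdd ⟨hl.trans hll', hvl'⟩)

theorem schwarz_antitone (hu : AEMeasurable u volume)
    (hfin : ∀ l, 0 < l → volume {y | l < u y} ≠ ∞) {x y : EuclideanSpace ℝ (Fin N)} (hx : x ≠ 0)
    (hxy : ‖x‖ ≤ ‖y‖) : schwarz u y ≤ schwarz u x := by
  by_contra! h
  obtain ⟨l, hlx, hly⟩ := exists_between h
  have hl : 0 < l := (schwarz_nonneg u x).trans_lt hlx
  have hy : y ≠ 0 := norm_pos_iff.1 ((norm_pos_iff.2 hx).trans_le hxy)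
  have hvy := (lt_schwarz_iff hu hfin hy hl).1 hly
  exact hlx.not_gt ((lt_schwarz_iff hu hfin hx hl).2
    ((measure_mono (ball_subset_ball hxy)).trans_lt hvy))

theorem superlevel_schwarz_ae_eq_ball [Nontrivial (EuclideanSpace ℝ (Fin N))]
    (hu : AEMeasurable u volume) (hfin : ∀ l, 0 < l → volume {y | l < u y} ≠ ∞) {l r : ℝ}
    (hl : 0 < l) (hr : volume (ball (0 : EuclideanSpace ℝ (Fin N)) r) = volume {y | l < u y}) :
    {x | l < schwarz u x} =ᵐ[volume] ball 0 r := by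
  refine eventuallyEq_set.2 ?_
  filter_upwards [Measure.ae_ne volume 0] with x hx
  rw [lt_schwarz_iff hu hfin hx hl, ← hr,
    Measure.addHaar_ball_lt_addHaar_ball_iff volume (norm_nonneg x), mem_ball_zero_iff]

end Schwarz

/-- For nonnegative `u ∈ L^p(ℝ^N)`, `u = u⋆` a.e. if and only if for almost
every pair `(x, y) ∈ ℝ^N × ℝ^N` (product Lebesgue measure) with `‖x‖ ≤ ‖y‖` one has
`u x ≥ u y`. -/
theorem statement6 {N : ℕ} (hN : 1 ≤ N) (p : ℝ) (hp : 1 ≤ p)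
    (u : EuclideanSpace ℝ (Fin N) → ℝ)
    (hu : MemLp u (ENNReal.ofReal p) volume) (hu0 : ∀ x, 0 ≤ u x) :
    u =ᵐ[volume] schwarz u ↔
      ∀ᵐ z : EuclideanSpace ℝ (Fin N) × EuclideanSpace ℝ (Fin N)
        ∂(volume.prod volume), ‖z.1‖ ≤ ‖z.2‖ → u z.2 ≤ u z.1 := by
  have : Nontrivial (EuclideanSpace ℝ (Fin N)) := by
    obtain ⟨n, rfl⟩ := Nat.exists_eq_add_of_le' hN
    infer_instance
  have hmeas := hu.aemeasurable
  have hfin : ∀ l, 0 < l → volume {y | l < u y} ≠ ∞ := fun l hl =>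
    hu.measure_superlevel_ne_top (ENNReal.ofReal_pos.2 (by linarith)).ne' ENNReal.ofReal_ne_top hl
  constructor
  · intro h
    have hx : ∀ᵐ x : EuclideanSpace ℝ (Fin N), u x = schwarz u x ∧ x ≠ 0 :=
      h.and (Measure.ae_ne volume 0)
    filter_upwards [Measure.quasiMeasurePreserving_fst.tendsto_ae.eventually hx,
      Measure.quasiMeasurePreserving_snd.tendsto_ae.eventually h] with z ⟨hz₁, hz₀⟩ hz₂ hle
    rw [hz₁, hz₂]
    exact schwarz_antitone hmeas hfin hz₀ hle
  · intro h
    refine ae_eq_of_forall_superlevel_ae_eq hu0 (schwarz_nonneg u) fun q hq => ?_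
    have hq' : (0 : ℝ) < q := Rat.cast_pos.2 hq
    obtain ⟨r, hr⟩ :=
      Measure.exists_addHaar_ball_eq (E := EuclideanSpace ℝ (Fin N)) volume (hfin q hq')
    exact (superlevel_ae_eq_ball_of_ae_antitone hmeas h hr (hfin q hq')).trans
      (superlevel_schwarz_ae_eq_ball hmeas hfin hq' hr).symm
end
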